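/- arXiv:1108.2934 — 11 statements merged into one kernel-verified Lean document; each statement's English description precedes it below -/
import Mathlib

section
/- Every pre-adhesive morphism is a regular monomorphism. That is, if m : C ⟶ A is a morphism in a category with pullbacks such that pushouts along m exist, are stable under pullback, and are also pullback squares, then m is a regular monomorphism. -/
/-!
The cokernel pair of `m` is a pushout along `m`, hence a pullback square; a square of the form
`m ≫ h = m ≫ i` that is a pullback says exactly that `m` is the equalizer of `h` and `i`.
-/

open CategoryTheory Limits

universe v u

variable {C : Type u} [Category.{v} C]

/-- A pushout square is stable under pullback: every pullback of the square
along a morphism into the pushout vertex (i.e. a commutative cube over it whose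
vertical faces are pullbacks) is again a pushout. -/
def IsStablePushout {W X Y Z : C} {f : W ⟶ X} {g : W ⟶ Y} {h : X ⟶ Z} {i : Y ⟶ Z}
    (_ : IsPushout f g h i) : Prop :=
  ∀ ⦃W' X' Y' Z' : C⦄ (f' : W' ⟶ X') (g' : W' ⟶ Y') (h' : X' ⟶ Z') (i' : Y' ⟶ Z')
    (αW : W' ⟶ W) (αX : X' ⟶ X) (αY : Y' ⟶ Y) (αZ : Z' ⟶ Z),
    IsPullback f' αW αX f → IsPullback g' αW αY g →
    IsPullback h' αX αZ h → IsPullback i' αY αZ i →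
    CommSq f' g' h' i' → IsPushout f' g' h' i'

/-- A morphism `m` is pre-adhesive if pushouts along `m` exist, are stable under
pullback, and are pullback squares. -/
def PreAdhesive {W X : C} (m : W ⟶ X) : Prop :=
  (∀ {Y : C} (f : W ⟶ Y), HasPushout m f) ∧
  ∀ {Y Z : C} (f : W ⟶ Y) (h : X ⟶ Z) (i : Y ⟶ Z) (H : IsPushout m f h i),
    IsStablePushout H ∧ IsPullback m f h i

/-- A morphism is adhesive if every pullback of it is pre-adhesive. -/
def AdhesiveMorphism {W X : C} (m : W ⟶ X) : Prop :=
  ∀ {W' X' : C} (a : W' ⟶ W) (m' : W' ⟶ X') (b : X' ⟶ X),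
    IsPullback a m' m b → PreAdhesive m'

noncomputable def CategoryTheory.IsPullback.regularMono {X Y Z : C} {f : X ⟶ Y} {g g' : Y ⟶ Z}
    (H : IsPullback f f g g') : RegularMono f :=
  ⟨Z, g, g', H.w, H.isLimitFork⟩

theorem PreAdhesive.exists_isPullback_self {X Y : C} {m : X ⟶ Y} (hm : PreAdhesive m) :
    ∃ (Z : C) (h i : Y ⟶ Z), IsPullback m m h i :=
  have := hm.1 m
  ⟨_, _, _, (hm.2 m _ _ (IsPushout.of_hasPushout m m)).2⟩

theorem preAdhesive_regularMono_general {X Y : C} (m : X ⟶ Y)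
    (hm : PreAdhesive m) : Nonempty (RegularMono m) := by
  obtain ⟨_, _, _, H⟩ := hm.exists_isPullback_self
  exact ⟨H.regularMono⟩

/-- Every pre-adhesive morphism is a regular monomorphism. -/
theorem preAdhesive_regularMono [HasPullbacks C] {X Y : C} (m : X ⟶ Y)
    (hm : PreAdhesive m) : Nonempty (RegularMono m) :=
  preAdhesive_regularMono_general m hm
end

section
/- Cancellation lemma for pullbacks over a stable pushout: suppose the square with vertices A₀, A₁, A₂, A (morphisms b₁ : A₀ ⟶ A₁, b₂ : A₀ ⟶ A₂, a₁ : A₁ ⟶ A, a₂ : A₂ ⟶ A) is a pushout that is stable under pullback. Suppose given p : A' ⟶ A, f : A ⟶ B, f' : A' ⟶ B', q : B' ⟶ B with f' ≫ q = p ≫ f, and for i = 1, 2 pullback squares p_i : A'_i ⟶ A_i of p along a_i (with top maps a'_i : A'_i ⟶ A'), such that for each i the composite rectangle (A'_i ⟶ B' over A_i ⟶ A ⟶ B) is a pullback. Then the square with sides p, f', q, f is a pullback. -/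
open CategoryTheory Limits

universe v u

variable {C : Type u} [Category.{v} C]

/-!
Let `P` be the pullback of `q` and `f`, and `c : A' ⟶ P` the comparison map. Pulling `A'` and `P`
back along `a₁` and `a₂` gives the same objects `A'₁`, `A'₂` (for `P` this is cancellation of
pullbacks against the rectangles `r₁`, `r₂`), and pulling back further along `b₁` gives a common
span. By stability of the pushout, both `A'` and `P` are pushouts of that span, under cocones
that differ by `c`, so `c` is an isomorphism.
-/

theorem CategoryTheory.CommSq.exists_isPullback_span {A₀ A₁ A₂ A A' A'₁ A'₂ : C}
    {b₁ : A₀ ⟶ A₁} {b₂ : A₀ ⟶ A₂} {a₁ : A₁ ⟶ A} {a₂ : A₂ ⟶ A} (sq : CommSq b₁ b₂ a₁ a₂)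
    {p : A' ⟶ A} {p₁ : A'₁ ⟶ A₁} {p₂ : A'₂ ⟶ A₂} {a'₁ : A'₁ ⟶ A'} {a'₂ : A'₂ ⟶ A'}
    (h₁ : IsPullback a'₁ p₁ p a₁) (h₂ : IsPullback a'₂ p₂ p a₂) [HasPullback p₁ b₁] :
    ∃ (A'₀ : C) (b'₁ : A'₀ ⟶ A'₁) (b'₂ : A'₀ ⟶ A'₂) (p₀ : A'₀ ⟶ A₀),
      IsPullback b'₁ p₀ p₁ b₁ ∧ IsPullback b'₂ p₀ p₂ b₂ ∧ CommSq b'₁ b'₂ a'₁ a'₂ := by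
  have s₁ := IsPullback.of_hasPullback p₁ b₁
  have t₁ : IsPullback (pullback.fst p₁ b₁ ≫ a'₁) (pullback.snd p₁ b₁) p (b₂ ≫ a₂) :=
    sq.w ▸ s₁.paste_horiz h₁
  let b'₂ := h₂.lift (pullback.fst p₁ b₁ ≫ a'₁) (pullback.snd p₁ b₁ ≫ b₂)
    (by rw [t₁.w, Category.assoc])
  have hb'₂ : b'₂ ≫ a'₂ = pullback.fst p₁ b₁ ≫ a'₁ := h₂.lift_fst _ _ _
  exact ⟨_, _, b'₂, _, s₁, .of_right (hb'₂ ▸ t₁) (h₂.lift_snd _ _ _) h₂, ⟨hb'₂.symm⟩⟩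

theorem IsStablePushout.isIso_of_isPullback {A₀ A₁ A₂ A : C}
    {b₁ : A₀ ⟶ A₁} {b₂ : A₀ ⟶ A₂} {a₁ : A₁ ⟶ A} {a₂ : A₂ ⟶ A}
    {H : IsPushout b₁ b₂ a₁ a₂} (hH : IsStablePushout H)
    {X Y A'₁ A'₂ : C} {pX : X ⟶ A} {pY : Y ⟶ A} (c : X ⟶ Y)
    {p₁ : A'₁ ⟶ A₁} {p₂ : A'₂ ⟶ A₂} {a'₁ : A'₁ ⟶ X} {a'₂ : A'₂ ⟶ X} [HasPullback p₁ b₁]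
    (h₁ : IsPullback a'₁ p₁ pX a₁) (h₂ : IsPullback a'₂ p₂ pX a₂)
    (k₁ : IsPullback (a'₁ ≫ c) p₁ pY a₁) (k₂ : IsPullback (a'₂ ≫ c) p₂ pY a₂) :
    IsIso c := by
  obtain ⟨_, b'₁, b'₂, p₀, s₁, s₂, top⟩ := H.toCommSq.exists_isPullback_span h₁ h₂
  have top' : CommSq b'₁ b'₂ (a'₁ ≫ c) (a'₂ ≫ c) := ⟨by rw [reassoc_of% top.w]⟩
  have HX := hH _ _ _ _ _ _ _ _ s₁ s₂ h₁ h₂ top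
  have HY := hH _ _ _ _ _ _ _ _ s₁ s₂ k₁ k₂ top'
  have hc : (HX.isoIsPushout _ _ HY).hom = c := by
    apply HX.hom_ext <;> simp
  exact hc ▸ inferInstance

/-- Cancellation lemma for pullbacks over a stable pushout. -/
theorem cancellation_over_stable_pushout [HasPullbacks C]
    {A₀ A₁ A₂ A A' B B' : C}
    {b₁ : A₀ ⟶ A₁} {b₂ : A₀ ⟶ A₂} {a₁ : A₁ ⟶ A} {a₂ : A₂ ⟶ A}
    (H : IsPushout b₁ b₂ a₁ a₂) (hH : IsStablePushout H)
    (p : A' ⟶ A) (f : A ⟶ B) (f' : A' ⟶ B') (q : B' ⟶ B)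
    (w : f' ≫ q = p ≫ f)
    {A'₁ A'₂ : C} (p₁ : A'₁ ⟶ A₁) (p₂ : A'₂ ⟶ A₂)
    (a'₁ : A'₁ ⟶ A') (a'₂ : A'₂ ⟶ A')
    (h₁ : IsPullback a'₁ p₁ p a₁) (h₂ : IsPullback a'₂ p₂ p a₂)
    (r₁ : IsPullback (a'₁ ≫ f') p₁ q (a₁ ≫ f))
    (r₂ : IsPullback (a'₂ ≫ f') p₂ q (a₂ ≫ f)) :
    IsPullback f' p q f := by
  let c : A' ⟶ pullback q f := pullback.lift f' p w
  have hcf : c ≫ pullback.fst q f = f' := pullback.lift_fst _ _ _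
  have hcp : c ≫ pullback.snd q f = p := pullback.lift_snd _ _ _
  have hP := IsPullback.of_hasPullback q f
  have k₁ : IsPullback (a'₁ ≫ c) p₁ (pullback.snd q f) a₁ :=
    .of_right (by rwa [Category.assoc, hcf]) (by rw [Category.assoc, hcp, h₁.w]) hP
  have k₂ : IsPullback (a'₂ ≫ c) p₂ (pullback.snd q f) a₂ :=
    .of_right (by rwa [Category.assoc, hcf]) (by rw [Category.assoc, hcp, h₂.w]) hP
  have := hH.isIso_of_isPullback c h₁ h₂ k₁ k₂
  exact .of_iso_pullback ⟨w⟩ (asIso c) hcf hcp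
end

section
/- The class of adhesive morphisms is closed under composition: if m : C ⟶ A and m' : A ⟶ A'' are both adhesive, then m ≫ m' is adhesive. -/
/-!
A pullback of `m ≫ m'` factors as a pullback of `m` followed by a pullback of `m'`, so it
suffices that pre-adhesive morphisms compose. A pushout along `j ≫ k` splits, through the
pushout along `j`, into a pushout along `j` next to a pushout along `k`. Pullback squares paste,
and so do stable pushouts: pulling the outer cube back along the middle column cuts it into two
cubes whose vertical faces are again pullbacks.
-/

open CategoryTheory Limits

universe v u

variable {C : Type u} [Category.{v} C]

lemma IsStablePushout.paste_horiz [HasPullbacks C] {X₁₁ X₁₂ X₁₃ X₂₁ X₂₂ X₂₃ : C}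
    {h₁₁ : X₁₁ ⟶ X₁₂} {h₁₂ : X₁₂ ⟶ X₁₃} {h₂₁ : X₂₁ ⟶ X₂₂} {h₂₂ : X₂₂ ⟶ X₂₃}
    {v₁₁ : X₁₁ ⟶ X₂₁} {v₁₂ : X₁₂ ⟶ X₂₂} {v₁₃ : X₁₃ ⟶ X₂₃}
    {s : IsPushout h₁₁ v₁₁ v₁₂ h₂₁} {t : IsPushout h₁₂ v₁₂ v₁₃ h₂₂}
    (hs : IsStablePushout s) (ht : IsStablePushout t) : IsStablePushout (s.paste_horiz t) := by
  intro W' X' Y' Z' f' g' h' i' αW αX αY αZ hf hg hh hi hsq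
  have hX₁₂ := IsPullback.of_hasPullback αX h₁₂
  have hX₂₂ := IsPullback.of_hasPullback αZ h₂₂
  have hh₁₁ := hf.of_right' hX₁₂
  have hv₁₂ := (t.w ▸ hX₁₂.paste_horiz hh).of_right' hX₂₂
  have hh₂₁ := hi.of_right' hX₂₂
  have hs' := hs _ _ _ _ _ _ _ _ hh₁₁ hg hv₁₂ hh₂₁
    ⟨hX₂₂.hom_ext (by simpa using hsq.w) (by simp [reassoc_of% hg.w, s.w])⟩
  have ht' := ht _ _ _ _ _ _ _ _ hX₁₂ hv₁₂ hh hX₂₂ ⟨(hX₂₂.lift_fst _ _ _).symm⟩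
  simpa using hs'.paste_horiz ht'

lemma PreAdhesive.comp [HasPullbacks C] {X Y Z : C} {j : X ⟶ Y} {k : Y ⟶ Z}
    (hj : PreAdhesive j) (hk : PreAdhesive k) : PreAdhesive (j ≫ k) := by
  refine ⟨fun f ↦ ?_, fun f h i H ↦ ?_⟩
  · have := hj.1 f
    have := hk.1 (pushout.inl j f)
    exact ((IsPushout.of_hasPushout j f).paste_horiz (IsPushout.of_hasPushout k _)).hasPushout
  · have := hj.1 f
    have hs := IsPushout.of_hasPushout j f
    obtain ⟨w, rfl, ht⟩ : ∃ w, pushout.inr j f ≫ w = i ∧ IsPushout k (pushout.inl j f) h w :=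
      ⟨_, hs.inr_desc _ _ _, H.of_left' hs⟩
    obtain ⟨hs_stable, hs_pullback⟩ := hj.2 _ _ _ hs
    obtain ⟨ht_stable, ht_pullback⟩ := hk.2 _ _ _ ht
    exact ⟨hs_stable.paste_horiz ht_stable, hs_pullback.paste_horiz ht_pullback⟩

/-- Adhesive morphisms are closed under composition. -/
theorem adhesive_comp [HasPullbacks C] {X Y Z : C} (m : X ⟶ Y) (m' : Y ⟶ Z)
    (hm : AdhesiveMorphism m) (hm' : AdhesiveMorphism m') :
    AdhesiveMorphism (m ≫ m') := by
  intro W' X' a n b hab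
  have hP := IsPullback.of_hasPullback m' b
  have ha := (hab.flip.of_right' hP.flip).flip
  simpa using (hm _ _ _ ha).comp (hm' _ _ _ hP)
end

section
/- The pushout of an adhesive morphism is a monomorphism: if m : C ⟶ A is adhesive and the square with f : C ⟶ B, m : C ⟶ A, g : A ⟶ D, n : B ⟶ D is a pushout, then n is a monomorphism. -/
/-!
Pull the pushout square back along `n`. Since `m` is mono and the square is also a pullback,
the pullback cube has an identity as the top edge over `m`, while the face over `n` is the kernel
pair of `n`. Stability makes the top square a pushout of an identity, so the kernel-pair
projection is an isomorphism, which forces `n` to be mono.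
-/
open CategoryTheory Limits

universe v u

variable {C : Type u} [Category.{v} C]

lemma AdhesiveMorphism.preAdhesive {W X : C} {m : W ⟶ X} (hm : AdhesiveMorphism m) :
    PreAdhesive m :=
  hm (𝟙 W) m (𝟙 X) (IsPullback.id_horiz m)

/-- The pushout of `m` along itself is a pullback, so `m` has trivial kernel pair. -/
lemma PreAdhesive.mono {W X : C} {m : W ⟶ X} (hm : PreAdhesive m) : Mono m := by
  have := hm.1 m
  have hpb : IsPullback m m (pushout.inl m m) (pushout.inr m m) :=
    (hm.2 m _ _ (IsPushout.of_hasPushout m m)).2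
  exact ⟨fun _ _ w => hpb.hom_ext w w⟩

lemma CategoryTheory.IsPullback.isPullback_lift_self_fst_of_mono {X A B D : C}
    {m : X ⟶ A} {f : X ⟶ B} {g : A ⟶ D} {n : B ⟶ D} [Mono m] [HasPullback n n]
    (h : IsPullback m f g n) :
    IsPullback (pullback.lift f f rfl) (𝟙 X) (pullback.fst n n) f := by
  -- Both composite squares exhibit `X` as the pullback of `n` along `f ≫ n = m ≫ g`.
  have hcomp : IsPullback (pullback.lift f f rfl ≫ pullback.snd n n) (𝟙 X) n (f ≫ n) := by
    rw [pullback.lift_snd, ← h.w]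
    simpa only [Category.id_comp] using (IsKernelPair.id_of_mono m).paste_horiz h.flip
  exact hcomp.of_right (by simp only [pullback.lift_fst, Category.id_comp])
    (IsPullback.of_hasPullback n n).flip

lemma IsStablePushout.mono_inr {X A B D : C}
    {m : X ⟶ A} {f : X ⟶ B} {g : A ⟶ D} {n : B ⟶ D} [Mono m] [HasPullback n n]
    {H : IsPushout m f g n} (hstab : IsStablePushout H) (hpb : IsPullback m f g n) : Mono n := by
  have htop : IsPushout (𝟙 X) (pullback.lift f f rfl) f (pullback.snd n n) :=
    hstab _ _ _ _ (𝟙 X) m (pullback.fst n n) n (IsKernelPair.id_of_mono m)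
      hpb.isPullback_lift_self_fst_of_mono hpb.flip (IsPullback.of_hasPullback n n).flip
      ⟨by rw [pullback.lift_snd, Category.id_comp]⟩
  have := htop.isIso_inr_of_isIso
  exact IsKernelPair.mono_of_isIso_fst (IsPullback.of_hasPullback n n).flip

/-- The pushout of an adhesive morphism is a monomorphism. -/
theorem mono_of_pushout_adhesive [HasPullbacks C] {A B D X : C}
    (m : X ⟶ A) (f : X ⟶ B) (g : A ⟶ D) (n : B ⟶ D)
    (hm : AdhesiveMorphism m) (H : IsPushout m f g n) : Mono n := by
  have pre := hm.preAdhesive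
  have := pre.mono
  obtain ⟨hstab, hpb⟩ := pre.2 f g n H
  exact hstab.mono_inr hpb
end

section
/- Adhesive morphisms are stable under pushout: if m : C ⟶ A is adhesive and the square f : C ⟶ B, m : C ⟶ A, g : A ⟶ D, n : B ⟶ D is a pushout, then n is adhesive. -/
/-!
Pull the pushout square back along `b : X' ⟶ D`. Since pushouts along `m` are stable, this gives
a pushout square along `m₁`, a pullback of `m`, with opposite side the given pullback `n'` of `n`.
Adhesiveness of `m` makes `m₁` pre-adhesive, so it suffices that pre-adhesive morphisms are stable
under pushout. For a pushout `R` along `n'`, paste it below the square along `m₁`: the composite is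
a pushout along `m₁`, so it is stable and a pullback, and both properties descend to `R` (the
second because the pushout of the mono `m₁` along such a square is again mono).
-/

open CategoryTheory Limits

universe v u

variable {C : Type u} [Category.{v} C]

lemma CategoryTheory.CommSq.exists_pullback_cube [HasPullbacks C] {W X Y Z : C}
    {f : W ⟶ X} {g : W ⟶ Y} {h : X ⟶ Z} {i : Y ⟶ Z} (sq : CommSq f g h i)
    {Y' Z' : C} {i' : Y' ⟶ Z'} {αY : Y' ⟶ Y} {αZ : Z' ⟶ Z} (hi : IsPullback i' αY αZ i) :
    ∃ (W' X' : C) (f' : W' ⟶ X') (g' : W' ⟶ Y') (h' : X' ⟶ Z') (αW : W' ⟶ W) (αX : X' ⟶ X),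
      IsPullback f' αW αX f ∧ IsPullback g' αW αY g ∧ IsPullback h' αX αZ h ∧
        CommSq f' g' h' i' := by
  have hh := (IsPullback.of_hasPullback h αZ).flip
  have hfh := (IsPullback.of_hasPullback (f ≫ h) αZ).flip
  set αW := pullback.fst (f ≫ h) αZ
  set q := pullback.snd (f ≫ h) αZ
  set αX := pullback.fst h αZ
  set h' := pullback.snd h αZ
  obtain ⟨f', hf'h', hf'αX⟩ : ∃ f', f' ≫ h' = q ∧ f' ≫ αX = αW ≫ f :=
    ⟨hh.lift q (αW ≫ f) (by simp [hfh.w]), hh.lift_fst _ _ _, hh.lift_snd _ _ _⟩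
  obtain ⟨g', hg'i', hg'αY⟩ : ∃ g', g' ≫ i' = q ∧ g' ≫ αY = αW ≫ g :=
    ⟨hi.lift q (αW ≫ g) (by simp [hfh.w, sq.w]), hi.lift_fst _ _ _, hi.lift_snd _ _ _⟩
  refine ⟨_, _, f', g', h', αW, αX, ?_, ?_, hh, ⟨hf'h'.trans hg'i'.symm⟩⟩
  · refine IsPullback.of_right ?_ hf'αX hh
    rw [hf'h']
    exact hfh
  · refine IsPullback.of_right ?_ hg'αY hi
    rw [hg'i', ← sq.w]
    exact hfh

lemma CategoryTheory.IsPullback.isIso_fst_of_mono_of_factors {P X Y Z : C}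
    {fst : P ⟶ X} {snd : P ⟶ Y} {f : X ⟶ Z} {m : Y ⟶ Z} [Mono m] (h : IsPullback fst snd f m)
    (e : X ⟶ Y) (he : e ≫ m = f) : IsIso fst :=
  ⟨h.lift (𝟙 X) e (by simp [he]),
    h.hom_ext (by simp) (by rw [← cancel_mono m]; simp [he, h.w]), by simp⟩

/-- Pull the square back along `i` itself. As it is a pullback, the new `f`-side is a pullback of
the mono `f` along a map factoring through `f`, hence an isomorphism, and so is its pushout
`pullback.snd i i`. -/
lemma IsStablePushout.mono_of_isPullback [HasPullbacks C] {W X Y Z : C}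
    {f : W ⟶ X} {g : W ⟶ Y} {h : X ⟶ Z} {i : Y ⟶ Z} {H : IsPushout f g h i} [Mono f]
    (hs : IsStablePushout H) (hp : IsPullback f g h i) : Mono i := by
  have hK := (IsPullback.of_hasPullback i i).flip
  obtain ⟨W', X', f', g', h', αW, αX, hf, hg, hh, sq⟩ := H.toCommSq.exists_pullback_cube hK
  have : IsIso f' :=
    hf.isIso_fst_of_mono_of_factors (hp.lift αX h' hh.w.symm) (hp.lift_fst _ _ _)
  have := (hs f' g' h' _ αW αX _ i hf hg hh hK sq).isIso_inr_of_isIso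
  exact IsKernelPair.mono_of_isIso_fst hK

lemma IsStablePushout.of_top [HasPullbacks C] {X₁₁ X₁₂ X₂₁ X₂₂ X₃₁ X₃₂ : C}
    {h₁₁ : X₁₁ ⟶ X₁₂} {h₂₁ : X₂₁ ⟶ X₂₂} {h₃₁ : X₃₁ ⟶ X₃₂}
    {v₁₁ : X₁₁ ⟶ X₂₁} {v₁₂ : X₁₂ ⟶ X₂₂} {v₂₁ : X₂₁ ⟶ X₃₁} {v₂₂ : X₂₂ ⟶ X₃₂}
    {s : IsPushout h₁₁ v₁₁ v₁₂ h₂₁} {t : IsPushout h₂₁ v₂₁ v₂₂ h₃₁}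
    (hst : IsStablePushout (s.paste_vert t)) (hs : IsStablePushout s) : IsStablePushout t := by
  intro Y₂₁ Y₂₂ Y₃₁ Y₃₂ k₂₁ w₂₁ w₂₂ k₃₁ α₂₁ α₂₂ α₃₁ α₃₂ e₂₁ e₂₁' e₂₂ e₃₁ sq
  obtain ⟨Y₁₁, Y₁₂, k₁₁, w₁₁, w₁₂, α₁₁, α₁₂, e₁₁, e₁₁', e₁₂, sq'⟩ :=
    s.toCommSq.exists_pullback_cube e₂₁
  have top := hs k₁₁ w₁₁ w₁₂ k₂₁ α₁₁ α₁₂ α₂₁ α₂₂ e₁₁ e₁₁' e₁₂ e₂₁ sq'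
  have big := hst k₁₁ (w₁₁ ≫ w₂₁) (w₁₂ ≫ w₂₂) k₃₁ α₁₁ α₁₂ α₃₁ α₃₂ e₁₁
    (e₁₁'.paste_horiz e₂₁') (e₁₂.paste_horiz e₂₂) e₃₁ ⟨by simp [reassoc_of% sq'.w, sq.w]⟩
  exact big.of_top sq.w top

/-- For the comparison map `c` into the pullback of `v₂₂` and `h₃₁`, the square
`(𝟙, v₁₁, v₁₁ ≫ c, c)` is a pullback of `s`; being a pushout of an identity, `c` is an iso. -/
lemma IsStablePushout.isPullback_of_top {X₁₁ X₁₂ X₂₁ X₂₂ X₃₁ X₃₂ : C}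
    {h₁₁ : X₁₁ ⟶ X₁₂} {h₂₁ : X₂₁ ⟶ X₂₂} {h₃₁ : X₃₁ ⟶ X₃₂}
    {v₁₁ : X₁₁ ⟶ X₂₁} {v₁₂ : X₁₂ ⟶ X₂₂} {v₂₁ : X₂₁ ⟶ X₃₁} {v₂₂ : X₂₂ ⟶ X₃₂}
    [HasPullback v₂₂ h₃₁] [Mono h₁₁] [Mono h₃₁]
    {s : IsPushout h₁₁ v₁₁ v₁₂ h₂₁} (hs : IsStablePushout s) (t : CommSq h₂₁ v₂₁ v₂₂ h₃₁)
    (hst : IsPullback h₁₁ (v₁₁ ≫ v₂₁) (v₁₂ ≫ v₂₂) h₃₁) : IsPullback h₂₁ v₂₁ v₂₂ h₃₁ := by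
  have hP := IsPullback.of_hasPullback v₂₂ h₃₁
  have := hP.mono_fst_of_mono
  set c := hP.lift h₂₁ v₂₁ t.w
  have hc : IsPullback h₁₁ (v₁₁ ≫ c) v₁₂ (pullback.fst v₂₂ h₃₁) :=
    IsPullback.of_bot (by simpa [c] using hst) (by simp [c, s.w]) hP
  have hcc : IsPushout (𝟙 X₁₁) v₁₁ (v₁₁ ≫ c) c :=
    hs (𝟙 X₁₁) v₁₁ (v₁₁ ≫ c) c (𝟙 X₁₁) h₁₁ (𝟙 X₂₁) (pullback.fst v₂₂ h₃₁)
      (IsKernelPair.id_of_mono h₁₁) IsPullback.of_id_snd hc.flip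
      (IsPullback.of_vert_isIso_mono ⟨by simp [c]⟩) ⟨by simp⟩
  have := hcc.isIso_inr_of_isIso
  have hiso : IsPullback h₂₁ c (𝟙 X₂₂) (pullback.fst v₂₂ h₃₁) :=
    IsPullback.of_vert_isIso ⟨by simp [c]⟩
  simpa [c] using hiso.paste_vert hP

lemma PreAdhesive.of_isPushout [HasPullbacks C] {W X Y Z : C}
    {m : W ⟶ X} {f : W ⟶ Y} {g : X ⟶ Z} {n : Y ⟶ Z} (hm : PreAdhesive m) (H : IsPushout m f g n) :
    PreAdhesive n := by
  have := hm.mono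
  obtain ⟨hasPushout, hpo⟩ := hm
  obtain ⟨hH, -⟩ := hpo f g n H
  refine ⟨fun u => ?_, fun u h i R => ?_⟩
  · have := hasPushout (f ≫ u)
    exact ((IsPushout.of_hasPushout m (f ≫ u)).of_top' H).hasPushout
  · obtain ⟨hHR, hHR'⟩ := hpo (f ≫ u) (g ≫ h) i (H.paste_vert R)
    have := hHR.mono_of_isPullback hHR'
    exact ⟨hHR.of_top hH, hH.isPullback_of_top R.toCommSq hHR'⟩

/-- Adhesive morphisms are stable under pushout. -/
theorem adhesive_of_pushout_adhesive [HasPullbacks C] {A B D X : C}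
    (m : X ⟶ A) (f : X ⟶ B) (g : A ⟶ D) (n : B ⟶ D)
    (hm : AdhesiveMorphism m) (H : IsPushout m f g n) :
    AdhesiveMorphism n := by
  intro W' X' a n' b hpb
  obtain ⟨hH, -⟩ := hm.preAdhesive.2 f g n H
  obtain ⟨X₁, A₁, m₁, f₁, g₁, pX, pA, hm₁, hf₁, hg₁, sq⟩ :=
    H.toCommSq.exists_pullback_cube hpb.flip
  exact (hm pX m₁ pA hm₁.flip).of_isPushout (hH m₁ f₁ g₁ n' pX pA a b hm₁ hf₁ hg₁ hpb.flip sq)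
end

section
/- Effectiveness of unions along adhesive subobjects: let h : A ⟶ E be a monomorphism and p : B ⟶ E an adhesive monomorphism in a category with pullbacks. Form the pullback C of h and p (with projections m : C ⟶ A and f : C ⟶ B) and the pushout D of f along m (with coprojections g : A ⟶ D and n : B ⟶ D). Then the induced morphism x : D ⟶ E is a monomorphism. -/
/-!
Since `m` is a pullback of the adhesive morphism `p`, it is pre-adhesive, so the pushout square
`m, f, g, n` is stable under pullback. Consequently, for every `t : T ⟶ D` the pullbacks of `g`
and `n` along `t` are jointly epimorphic, and two maps into `D` can be compared piecewise on
`A` and on `B`. On `A` the comparison reduces to `h` being mono; on `B` a generalised element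
of `A` meeting `B` over `E` factors through the intersection `P` (a pullback), where `g` and
`n` agree.
-/

open CategoryTheory Limits

universe v u

variable {C : Type u} [Category.{v} C]

namespace IsStablePushout

variable {W X Y Z : C} {f : W ⟶ X} {g : W ⟶ Y} {h : X ⟶ Z} {i : Y ⟶ Z} {H : IsPushout f g h i}

theorem flip (hH : IsStablePushout H) : IsStablePushout H.flip :=
  fun _ _ _ _ f' g' h' i' αW αX αY αZ hf hg hh hi sq =>
    (hH g' f' i' h' αW αY αX αZ hg hf hi hh sq.flip).flip

variable [HasPullbacks C]

theorem exists_isPushout_pullback (hH : IsStablePushout H) {T : C} (t : T ⟶ Z) :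
    ∃ (W' : C) (f' : W' ⟶ pullback h t) (g' : W' ⟶ pullback i t),
      IsPushout f' g' (pullback.snd h t) (pullback.snd i t) := by
  have pbX := (IsPullback.of_hasPullback h t).flip
  have pbY := (IsPullback.of_hasPullback i t).flip
  have pbW := IsPullback.of_hasPullback (pullback.fst h t) f
  have w : (pullback.snd (pullback.fst h t) f ≫ g) ≫ i =
      (pullback.fst (pullback.fst h t) f ≫ pullback.snd h t) ≫ t := by
    rw [Category.assoc, ← H.w, ← pbW.w_assoc, ← pbX.w, Category.assoc]
  let g' := pullback.lift _ _ w
  have pbW' : IsPullback g' (pullback.snd (pullback.fst h t) f) (pullback.fst i t) g := by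
    refine IsPullback.of_right ?_ (pullback.lift_fst _ _ _) pbY
    rw [pullback.lift_snd, ← H.w]
    exact pbW.paste_horiz pbX
  exact ⟨_, _, g', hH _ _ _ _ _ _ _ t pbW pbW' pbX pbY ⟨(pullback.lift_snd _ _ _).symm⟩⟩

theorem hom_ext_of_pullback (hH : IsStablePushout H) {T S : C} (t : T ⟶ Z) {q r : T ⟶ S}
    (hh : pullback.snd h t ≫ q = pullback.snd h t ≫ r)
    (hi : pullback.snd i t ≫ q = pullback.snd i t ≫ r) : q = r := by
  obtain ⟨_, _, _, H'⟩ := hH.exists_isPushout_pullback t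
  exact H'.hom_ext hh hi

end IsStablePushout

section Union

variable [HasPullbacks C] {A B E P D : C} {h : A ⟶ E} {p : B ⟶ E} {m : P ⟶ A} {f : P ⟶ B}
  {g : A ⟶ D} {n : B ⟶ D} {x : D ⟶ E}

theorem IsStablePushout.eq_comp_inl_of_comp_eq [Mono h] (hpb : IsPullback m f h p)
    {hpo : IsPushout m f g n} (hstab : IsStablePushout hpo) (hx₁ : g ≫ x = h) (hx₂ : n ≫ x = p)
    {S : C} {α : S ⟶ A} {s : S ⟶ D} (hs : s ≫ x = α ≫ h) : s = α ≫ g := by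
  refine hstab.hom_ext_of_pullback s ?_ ?_
  · have hA : pullback.fst g s = pullback.snd g s ≫ α := by
      rw [← cancel_mono h, ← hx₁, pullback.condition_assoc, hs, Category.assoc, hx₁]
    rw [← pullback.condition, hA, Category.assoc]
  · have w : (pullback.snd n s ≫ α) ≫ h = pullback.fst n s ≫ p := by
      rw [← hx₂, pullback.condition_assoc, hs, Category.assoc]
    rw [← pullback.condition, ← hpb.lift_snd _ _ w, Category.assoc, ← hpo.w,
      hpb.lift_fst_assoc, Category.assoc]

end Union

/-- Unions with an adhesive subobject are effective: the induced map out of the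
pushout over the intersection is a monomorphism. -/
theorem effective_union [HasPullbacks C] {A B E P D : C}
    (h : A ⟶ E) (p : B ⟶ E) [Mono h] [Mono p] (hp : AdhesiveMorphism p)
    (m : P ⟶ A) (f : P ⟶ B) (hpb : IsPullback m f h p)
    (g : A ⟶ D) (n : B ⟶ D) (hpo : IsPushout m f g n)
    (x : D ⟶ E) (hx₁ : g ≫ x = h) (hx₂ : n ≫ x = p) : Mono x := by
  have hstab : IsStablePushout hpo := ((hp f m h hpb.flip).2 f g n hpo).1
  refine ⟨fun a b hab => hstab.hom_ext_of_pullback a ?_ ?_⟩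
  · rw [← pullback.condition]
    refine (hstab.eq_comp_inl_of_comp_eq hpb hx₁ hx₂ ?_).symm
    rw [Category.assoc, ← hab, ← pullback.condition_assoc, hx₁]
  · rw [← pullback.condition]
    refine (hstab.flip.eq_comp_inl_of_comp_eq hpb.flip hx₂ hx₁ ?_).symm
    rw [Category.assoc, ← hab, ← pullback.condition_assoc, hx₂]
end

section
/- Let 𝒞 be a category with pullbacks in which split monomorphisms are adhesive and adhesive subobjects are closed under binary union. Let m : C ⟶ A be adhesive, f : C ⟶ B arbitrary, and form the pushout g : A ⟶ D, n : B ⟶ D of f along m. Let (f₁, f₂) : C₂ ⇉ C and (g₁, g₂) : A₂ ⇉ A be the kernel pairs of f and g respectively, m₂ : C₂ ⟶ A₂ the induced map, and γ : C ⟶ C₂, δ : A ⟶ A₂ the diagonals. Then the square (γ, m, m₂, δ) is both a pushout and a pullback. -/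
open CategoryTheory Limits

universe v u

variable {C : Type u} [Category.{v} C]

/-- Adhesive subobjects are closed under binary union: the union (pushout over
the intersection) of two adhesive subobjects is again adhesive. -/
def AdhesiveUnionClosed (C : Type u) [Category.{v} C] : Prop :=
  ∀ {X A₁ A₂ P Q : C} (m₁ : A₁ ⟶ X) (m₂ : A₂ ⟶ X) (p₁ : P ⟶ A₁) (p₂ : P ⟶ A₂)
    (q₁ : A₁ ⟶ Q) (q₂ : A₂ ⟶ Q) (u : Q ⟶ X),
    Mono m₁ → Mono m₂ → AdhesiveMorphism m₁ → AdhesiveMorphism m₂ →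
    IsPullback p₁ p₂ m₁ m₂ → IsPushout p₁ p₂ q₁ q₂ →
    q₁ ≫ u = m₁ → q₂ ≫ u = m₂ → AdhesiveMorphism u

/-- Every split monomorphism is adhesive. -/
def SplitMonosAdhesive (C : Type u) [Category.{v} C] : Prop :=
  ∀ {X Y : C} (s : X ⟶ Y), IsSplitMono s → AdhesiveMorphism s

lemma AdhesiveMorphism.of_isPullback {W X W' X' : C} {m : W ⟶ X} {a : W' ⟶ W} {m' : W' ⟶ X'}
    {b : X' ⟶ X} (hm : AdhesiveMorphism m) (h : IsPullback a m' m b) : AdhesiveMorphism m' :=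
  fun a' m'' b' h' => hm (a' ≫ a) m'' (b' ≫ b) (h'.paste_horiz h)

lemma PreAdhesive.isIso_of_isPushout_comp {W X X' Y P : C} {a : W ⟶ X} {k : W ⟶ Y}
    {h : X ⟶ P} {i : Y ⟶ P} {u : X ⟶ X'} {h' : X' ⟶ P} (hu : PreAdhesive u)
    (s : IsPushout a k h i) (t : IsPushout (a ≫ u) k h' i) (w : u ≫ h' = h) : IsIso u := by
  have hsq : IsPushout u h h' (𝟙 P) :=
    IsPushout.of_left (by simpa using t) (by simpa using w) s
  exact (hu.2 h h' (𝟙 P) hsq).2.isIso_fst_of_isIso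

lemma CategoryTheory.IsPullback.kernelPair_fst {X A B D C₂ A₂ : C} {m : X ⟶ A} {f : X ⟶ B}
    {g : A ⟶ D} {n : B ⟶ D} (H : IsPullback m f g n) {f₁ f₂ : C₂ ⟶ X} (hf : IsKernelPair f f₁ f₂)
    {g₁ g₂ : A₂ ⟶ A} (hg : IsKernelPair g g₁ g₂) {m₂ : C₂ ⟶ A₂}
    (h₁ : m₂ ≫ g₁ = f₁ ≫ m) (h₂ : m₂ ≫ g₂ = f₂ ≫ m) : IsPullback f₁ m₂ m g₁ := by
  refine IsPullback.of_isLimit (PullbackCone.IsLimit.mk h₁.symm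
    (fun s => hf.lift s.fst (H.lift (s.snd ≫ g₂) (s.fst ≫ f) ?_) (H.lift_snd ..).symm)
    (fun s => hf.lift_fst ..) (fun s => hg.hom_ext ?_ ?_)
    (fun s l hl₁ hl₂ => hf.hom_ext (hl₁.trans (hf.lift_fst ..).symm) ?_))
  · rw [Category.assoc, Category.assoc, ← hg.w, ← Category.assoc, ← s.condition,
      Category.assoc, H.w]
  · rw [Category.assoc, h₁, hf.lift_fst_assoc, s.condition]
  · rw [Category.assoc, h₂, hf.lift_snd_assoc, H.lift_fst]
  · refine H.hom_ext ?_ ?_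
    · rw [Category.assoc, ← h₂, ← Category.assoc, hl₂, hf.lift_snd, H.lift_fst]
    · rw [Category.assoc, ← hf.w, ← Category.assoc, hl₁, hf.lift_snd, H.lift_snd]

/-- Given a pushout of an adhesive morphism `m` along `f`, the square formed by
the diagonals into the kernel pairs of `f` and `g` and the induced map between
the kernel pairs is both a pushout and a pullback. -/
theorem diagonal_square_pushout_pullback [HasPullbacks C]
    (hsplit : SplitMonosAdhesive C) (hunion : AdhesiveUnionClosed C)
    {X A B D C₂ A₂ : C} (m : X ⟶ A) (f : X ⟶ B) (g : A ⟶ D) (n : B ⟶ D)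
    (hm : AdhesiveMorphism m) (H : IsPushout m f g n)
    (f₁ f₂ : C₂ ⟶ X) (hf : IsKernelPair f f₁ f₂)
    (g₁ g₂ : A₂ ⟶ A) (hg : IsKernelPair g g₁ g₂)
    (m₂ : C₂ ⟶ A₂) (hm₂₁ : m₂ ≫ g₁ = f₁ ≫ m) (hm₂₂ : m₂ ≫ g₂ = f₂ ≫ m)
    (γ : X ⟶ C₂) (hγ₁ : γ ≫ f₁ = 𝟙 X) (hγ₂ : γ ≫ f₂ = 𝟙 X)
    (δ : A ⟶ A₂) (hδ₁ : δ ≫ g₁ = 𝟙 A) (hδ₂ : δ ≫ g₂ = 𝟙 A) :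
    IsPushout γ m m₂ δ ∧ IsPullback γ m m₂ δ := by
  obtain ⟨Hst, Hpb⟩ := hm.preAdhesive.2 f g n H
  have pb₁ : IsPullback f₁ m₂ m g₁ := Hpb.kernelPair_fst hf hg hm₂₁ hm₂₂
  have pb₂ : IsPullback f₂ m₂ m g₂ := Hpb.kernelPair_fst hf.flip hg.flip hm₂₂ hm₂₁
  have w : γ ≫ m₂ = m ≫ δ := hg.hom_ext (by simp [hm₂₁, hδ₁, reassoc_of% hγ₁])
    (by simp [hm₂₂, hδ₂, reassoc_of% hγ₂])
  have pbDiag : IsPullback γ m m₂ δ :=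
    IsPullback.of_right (by simpa [hγ₁, hδ₁] using IsPullback.of_id_fst) w pb₁
  have P₁ : IsPushout m₂ f₁ g₁ m := Hst m₂ f₁ g₁ m f₂ g₂ f g pb₂.flip hf hg Hpb ⟨hm₂₁⟩
  have hγ : AdhesiveMorphism γ := hsplit γ (IsSplitMono.mk' ⟨f₁, hγ₁⟩)
  have : IsSplitMono δ := IsSplitMono.mk' ⟨g₁, hδ₁⟩
  have hm₂ : AdhesiveMorphism m₂ := hm.of_isPullback pb₁
  have := hγ.preAdhesive.1 m
  have := hm₂.preAdhesive.mono
  have hQ := IsPushout.of_hasPushout γ m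
  obtain ⟨u, hq₁, hq₂⟩ :
      ∃ u : pushout γ m ⟶ A₂, pushout.inl γ m ≫ u = m₂ ∧ pushout.inr γ m ≫ u = δ :=
    ⟨pushout.desc m₂ δ w, pushout.inl_desc .., pushout.inr_desc ..⟩
  have hu : AdhesiveMorphism u := hunion m₂ δ γ m _ _ u inferInstance inferInstance hm₂
    (hsplit δ inferInstance) pbDiag hQ hq₁ hq₂
  have hQf₁ : IsPushout f₁ (pushout.inl γ m) m (u ≫ g₁) :=
    IsPushout.of_left (by simpa [hγ₁, reassoc_of% hq₂, hδ₁] using IsPushout.of_id_fst (f := m))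
      (by simpa [reassoc_of% hq₁] using hm₂₁.symm) hQ
  have : IsIso u := hu.preAdhesive.isIso_of_isPushout_comp hQf₁.flip (by rwa [hq₁]) rfl
  exact ⟨hQ.of_iso (Iso.refl _) (Iso.refl _) (Iso.refl _) (asIso u)
    (by simp) (by simp) (by simpa using hq₁) (by simpa using hq₂), pbDiag⟩
end

section
/- In an rm-quasiadhesive category, if m : A ⟶ X is the union of two regular subobjects m₁ : A₁ ⟶ X and m₂ : A₂ ⟶ X (constructed as the pushout over their intersection), then m factors as a stable epimorphism followed by a regular monomorphism, and this factorization is stable under pullback. -/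
open CategoryTheory Limits

universe v u

variable {C : Type u} [Category.{v} C]

/-- A category with pullbacks is rm-adhesive if it has pushouts along regular
monomorphisms and these pushouts are van Kampen. -/
def RmAdhesive (C : Type u) [Category.{v} C] : Prop :=
  (∀ {X Y Z : C} (m : Z ⟶ X) (f : Z ⟶ Y), RegularMono m → HasPushout m f) ∧
  ∀ {X Y Z W : C} (m : Z ⟶ X) (f : Z ⟶ Y) (g : X ⟶ W) (n : Y ⟶ W),
    RegularMono m → ∀ (H : IsPushout m f g n), H.IsVanKampen

/-- A category with pullbacks is rm-quasiadhesive if it has pushouts along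
regular monomorphisms and these pushouts are stable under pullback and are
pullback squares. -/
def RmQuasiadhesive (C : Type u) [Category.{v} C] : Prop :=
  (∀ {X Y Z : C} (m : Z ⟶ X) (f : Z ⟶ Y), RegularMono m → HasPushout m f) ∧
  ∀ {X Y Z W : C} (m : Z ⟶ X) (f : Z ⟶ Y) (g : X ⟶ W) (n : Y ⟶ W),
    RegularMono m → ∀ (H : IsPushout m f g n),
      IsStablePushout H ∧ IsPullback m f g n

/-- A stable epimorphism: every pullback of it is an epimorphism. -/
def StableEpi {X Y : C} (e : X ⟶ Y) : Prop :=
  ∀ {X' Y' : C} (e' : X' ⟶ Y') (a : X' ⟶ X) (b : Y' ⟶ Y),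
    IsPullback a e' e b → Epi e'

/-!
The regular part of `m` is the equalizer `n` of the two coprojections `inl, inr : X ⟶ Z` of the
cokernel pair of `m`. That cokernel pair exists because it can be assembled from pushouts along
regular monomorphisms, `Z = (X ⊔_{A₁} X) ⊔_{A₂ ⊔_P A₂} A₂`, where `A₂ ⊔_P A₂ ⟶ X ⊔_{A₁} X` is
itself regular, being a pullback of `m₂`. All three pushouts are stable, so pulling the
construction back along any `g : Y ⟶ X` with `g ≫ inl = g ≫ inr` computes the cokernel pair of
the union of the pulled-back subobjects of `Y`, and finds it to be `(𝟙 Y, 𝟙 Y)`: these subobjects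
are jointly epimorphic. A pullback of `e` along `b` receives both of them for `g = b ≫ n`, so it
is an epimorphism.
-/

/-- Unlike in `IsStablePushout`, only the pullbacks over `Z` are required: the faces over `f` and
`g` are pullbacks by pasting. -/
theorem IsStablePushout.isPushout_of_isPullback {W X Y Z : C} {f : W ⟶ X} {g : W ⟶ Y}
    {h : X ⟶ Z} {i : Y ⟶ Z} {H : IsPushout f g h i} (hH : IsStablePushout H)
    {W' X' Y' Z' : C} {αZ : Z' ⟶ Z}
    {αX : X' ⟶ X} {h' : X' ⟶ Z'} (hX : IsPullback αX h' h αZ)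
    {αY : Y' ⟶ Y} {i' : Y' ⟶ Z'} (hY : IsPullback αY i' i αZ)
    {αW : W' ⟶ W} {d' : W' ⟶ Z'} (hW : IsPullback αW d' (f ≫ h) αZ)
    (f' : W' ⟶ X') (g' : W' ⟶ Y')
    (hf₁ : f' ≫ αX = αW ≫ f) (hf₂ : f' ≫ h' = d') (hg₁ : g' ≫ αY = αW ≫ g)
    (hg₂ : g' ≫ i' = d') :
    IsPushout f' g' h' i' := by
  have hf : IsPullback (f' ≫ h') αW αZ (f ≫ h) := by rw [hf₂]; exact hW.flip
  have hg : IsPullback (g' ≫ i') αW αZ (g ≫ i) := by rw [hg₂, ← H.w]; exact hW.flip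
  exact hH f' g' h' i' αW αX αY αZ (hf.of_right hf₁ hX.flip) (hg.of_right hg₁ hY.flip)
    hX.flip hY.flip ⟨hf₂.trans hg₂.symm⟩

/-- Pulling back the cokernel pair of `f` along `γ`, in a situation where both coprojections
pull back to the same map `g`, yields the cokernel pair of the pullback of `f` along `g`. -/
theorem IsStablePushout.isPushout_lift_lift {A X K L : C} {f : A ⟶ X} {c₁ c₂ : X ⟶ K}
    {H : IsPushout f f c₁ c₂} (hH : IsStablePushout H) {Y K' : C} {ζ : K ⟶ L} {ω : Y ⟶ L}
    {γ : K' ⟶ K} {σ : K' ⟶ Y} (hK : IsPullback γ σ ζ ω) {Y' : C} {g : Y' ⟶ X} {s : Y' ⟶ Y}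
    (h₁ : IsPullback g s (c₁ ≫ ζ) ω) (h₂ : IsPullback g s (c₂ ≫ ζ) ω)
    {A' : C} {a : A' ⟶ A} {w : A' ⟶ Y'} (hA : IsPullback a w f g) :
    IsPushout w w (hK.lift (g ≫ c₁) s (by rw [Category.assoc, h₁.w]))
      (hK.lift (g ≫ c₂) s (by rw [Category.assoc, h₂.w])) := by
  have hκ₁ := IsPullback.of_bot' h₁ hK
  have hκ₂ := IsPullback.of_bot' h₂ hK
  refine hH.isPushout_of_isPullback hκ₁ hκ₂ (hA.paste_vert hκ₁) w w hA.w.symm rfl hA.w.symm ?_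
  apply hK.hom_ext
  · simp [← hA.w_assoc, H.w]
  · simp

theorem RmQuasiadhesive.exists_isStablePushout (hC : RmQuasiadhesive C) {W X Y : C}
    {m : W ⟶ X} (hm : RegularMono m) (f : W ⟶ Y) :
    ∃ (Z : C) (h : X ⟶ Z) (i : Y ⟶ Z) (H : IsPushout m f h i), IsStablePushout H :=
  have := hC.1 m f hm
  ⟨_, _, _, .of_hasPushout m f, (hC.2 m f _ _ hm (.of_hasPushout m f)).1⟩

/-- The comparison map `k` between the cokernel pair of `p₂` and that of `m₁` is the pullback
of `m₂` along the codiagonal: both sides are cokernel pairs of `p₂`, the second by stability. -/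
theorem isPullback_cokernelPair_comparison {X A₁ A₂ P K D : C}
    {m₁ : A₁ ⟶ X} {m₂ : A₂ ⟶ X} {p₁ : P ⟶ A₁} {p₂ : P ⟶ A₂} (hpb : IsPullback p₁ p₂ m₁ m₂)
    {c₁ c₂ : X ⟶ K} {H : IsPushout m₁ m₁ c₁ c₂} (hH : IsStablePushout H)
    {d₁ d₂ : A₂ ⟶ D} (hD : IsPushout p₂ p₂ d₁ d₂) {k : D ⟶ K}
    (hk₁ : d₁ ≫ k = m₂ ≫ c₁) (hk₂ : d₂ ≫ k = m₂ ≫ c₂) {δ : K ⟶ X}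
    [HasPullback δ m₂] (hδ₁ : c₁ ≫ δ = 𝟙 X) (hδ₂ : c₂ ≫ δ = 𝟙 X) {δ' : D ⟶ A₂}
    (hδ'₁ : d₁ ≫ δ' = 𝟙 A₂) (hδ'₂ : d₂ ≫ δ' = 𝟙 A₂) :
    IsPullback k δ' δ m₂ := by
  have hE := IsPullback.of_hasPullback δ m₂
  have hid : ∀ {c : X ⟶ K}, c ≫ δ = 𝟙 X → IsPullback m₂ (𝟙 A₂) (c ≫ δ) m₂ := fun hc => by
    rw [hc]; exact .of_id_snd
  have hE' := hH.isPushout_lift_lift hE (hid hδ₁) (hid hδ₂) hpb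
  let e := hD.isoIsPushout _ _ hE'
  refine hE.of_iso e.symm (Iso.refl _) (Iso.refl _) (Iso.refl _) ?_ ?_ (by simp) (by simp) <;>
    simp only [Iso.symm_hom, Iso.refl_hom, Category.comp_id, Iso.eq_inv_comp] <;>
    apply hD.hom_ext <;> simp [e, hk₁, hk₂, hδ'₁, hδ'₂]

noncomputable def regularMonoOfIsPullback {I X Z : C} {n : I ⟶ X} {α β : X ⟶ Z}
    (h : IsPullback n n α β) : RegularMono n where
  Z := Z
  left := α
  right := β
  w := h.w
  isLimit := Fork.IsLimit.mk' _ fun s =>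
    ⟨h.lift s.ι s.ι s.condition, h.lift_fst _ _ _, fun hm => h.hom_ext (by simpa using hm)
      (by simpa using hm)⟩

/-- The data computing the cokernel pair of the union of `m₁` and `m₂` out of pushouts along
regular monomorphisms: `K = X ⊔_{A₁} X`, `D = A₂ ⊔_P A₂`, and `Z = K ⊔_D A₂` glues the two copies
of `A₂` in `K`. -/
structure UnionCokernelPair {X A₁ A₂ P : C} (m₁ : A₁ ⟶ X) (m₂ : A₂ ⟶ X) (p₂ : P ⟶ A₂) where
  K : C
  c₁ : X ⟶ K
  c₂ : X ⟶ K
  isPushout_c : IsPushout m₁ m₁ c₁ c₂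
  D : C
  d₁ : A₂ ⟶ D
  d₂ : A₂ ⟶ D
  isPushout_d : IsPushout p₂ p₂ d₁ d₂
  k : D ⟶ K
  d₁_k : d₁ ≫ k = m₂ ≫ c₁
  d₂_k : d₂ ≫ k = m₂ ≫ c₂
  codiag : D ⟶ A₂
  d₁_codiag : d₁ ≫ codiag = 𝟙 A₂
  d₂_codiag : d₂ ≫ codiag = 𝟙 A₂
  Z : C
  ζ : K ⟶ Z
  θ : A₂ ⟶ Z
  isPushout_z : IsPushout k codiag ζ θ

namespace UnionCokernelPair

variable {X A₁ A₂ P : C} {m₁ : A₁ ⟶ X} {m₂ : A₂ ⟶ X} {p₂ : P ⟶ A₂}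
  (U : UnionCokernelPair m₁ m₂ p₂)

def IsStable : Prop :=
  IsStablePushout U.isPushout_c ∧ IsStablePushout U.isPushout_d ∧ IsStablePushout U.isPushout_z

def inl : X ⟶ U.Z := U.c₁ ≫ U.ζ

def inr : X ⟶ U.Z := U.c₂ ≫ U.ζ

theorem θ_eq_d₁ : U.θ = U.d₁ ≫ U.k ≫ U.ζ := by
  rw [U.isPushout_z.w, reassoc_of% U.d₁_codiag]

theorem θ_eq_d₂ : U.θ = U.d₂ ≫ U.k ≫ U.ζ := by
  rw [U.isPushout_z.w, reassoc_of% U.d₂_codiag]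

theorem θ_eq_inl : U.θ = m₂ ≫ U.inl := by
  rw [θ_eq_d₁, reassoc_of% U.d₁_k, inl]

theorem θ_eq_inr : U.θ = m₂ ≫ U.inr := by
  rw [θ_eq_d₂, reassoc_of% U.d₂_k, inr]

theorem condition₁ : m₁ ≫ U.inl = m₁ ≫ U.inr := U.isPushout_c.w_assoc U.ζ

theorem condition₂ : m₂ ≫ U.inl = m₂ ≫ U.inr := U.θ_eq_inl.symm.trans U.θ_eq_inr

theorem exists_desc {T : C} (x y : X ⟶ T) (h₁ : m₁ ≫ x = m₁ ≫ y) (h₂ : m₂ ≫ x = m₂ ≫ y) :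
    ∃ z : U.Z ⟶ T, U.inl ≫ z = x ∧ U.inr ≫ z = y := by
  let χ := U.isPushout_c.desc x y h₁
  have hχ : U.k ≫ χ = U.codiag ≫ m₂ ≫ x :=
    U.isPushout_d.hom_ext (by simp [χ, reassoc_of% U.d₁_k, reassoc_of% U.d₁_codiag])
      (by simp [χ, reassoc_of% U.d₂_k, reassoc_of% U.d₂_codiag, h₂])
  exact ⟨U.isPushout_z.desc χ (m₂ ≫ x) hχ, by simp [χ, inl], by simp [χ, inr]⟩

theorem eq_of_inl_eq_inr (h : U.inl = U.inr) {T : C} {x y : X ⟶ T} (h₁ : m₁ ≫ x = m₁ ≫ y)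
    (h₂ : m₂ ≫ x = m₂ ≫ y) : x = y := by
  obtain ⟨z, hx, hy⟩ := U.exists_desc x y h₁ h₂
  rw [← hx, ← hy, h]

noncomputable def retraction : U.Z ⟶ X :=
  (U.exists_desc (𝟙 X) (𝟙 X) rfl rfl).choose

@[simp]
theorem inl_retraction : U.inl ≫ U.retraction = 𝟙 X :=
  (U.exists_desc (𝟙 X) (𝟙 X) rfl rfl).choose_spec.1

@[simp]
theorem inr_retraction : U.inr ≫ U.retraction = 𝟙 X :=
  (U.exists_desc (𝟙 X) (𝟙 X) rfl rfl).choose_spec.2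

instance : Mono U.inl := (SplitMono.mk _ U.inl_retraction).mono

instance : Mono U.inr := (SplitMono.mk _ U.inr_retraction).mono

variable {U}

/-- Pulling the construction back along `g ≫ inl` gives the construction for the pullbacks
`w₁, w₂, y`, with vertex `Y` and both coprojections `𝟙 Y`. -/
theorem IsStable.exists_pullback [HasPullbacks C] (hU : U.IsStable) {Y : C} {g : Y ⟶ X}
    (hg : g ≫ U.inl = g ≫ U.inr) {A₁' A₂' P' : C} {a₁ : A₁' ⟶ A₁} {w₁ : A₁' ⟶ Y}
    (h₁ : IsPullback a₁ w₁ m₁ g) {a₂ : A₂' ⟶ A₂} {w₂ : A₂' ⟶ Y} (h₂ : IsPullback a₂ w₂ m₂ g)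
    {b : P' ⟶ P} {y : P' ⟶ A₂'} (hP : IsPullback b y p₂ a₂) :
    ∃ U' : UnionCokernelPair w₁ w₂ y, U'.inl = U'.inr := by
  obtain ⟨hc, hd, hz⟩ := hU
  have hmono : ∀ (j : X ⟶ U.Z) [Mono j], g ≫ j = g ≫ U.inl →
      IsPullback g (𝟙 Y) j (g ≫ U.inl) := fun j _ hj =>
    .of_vert_isIso_mono ⟨by simp [hj]⟩
  have hA : IsPullback a₂ w₂ U.θ (g ≫ U.inl) := by
    simpa [U.θ_eq_inl] using h₂.paste_vert (hmono _ rfl)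
  obtain ⟨K', γ, σ, hK⟩ : ∃ (K' : C) (γ : K' ⟶ U.K) (σ : K' ⟶ Y),
      IsPullback γ σ U.ζ (g ≫ U.inl) := ⟨_, _, _, .of_hasPullback _ _⟩
  obtain ⟨D', δ, τ, hD⟩ : ∃ (D' : C) (δ : D' ⟶ U.D) (τ : D' ⟶ Y),
      IsPullback δ τ (U.k ≫ U.ζ) (g ≫ U.inl) := ⟨_, _, _, .of_hasPullback _ _⟩
  have hc' := hc.isPushout_lift_lift hK (hmono U.inl rfl) (hmono U.inr hg.symm) h₁
  have hd' := hd.isPushout_lift_lift hD (by rwa [← θ_eq_d₁]) (by rwa [← θ_eq_d₂]) hP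
  let k' := hK.lift (δ ≫ U.k) τ (by simp [hD.w])
  let codiag' := hA.lift (δ ≫ U.codiag) τ (by simp [← U.isPushout_z.w, hD.w])
  have hz' := hz.isPushout_of_isPullback hK hA hD k' codiag' (by simp [k']) (by simp [k'])
    (by simp [codiag']) (by simp [codiag'])
  refine ⟨⟨_, _, _, hc', _, _, _, hd', k', ?_, ?_, codiag', ?_, ?_, _, _, _, hz'⟩,
    by simp only [inl, inr, IsPullback.lift_snd]⟩
  · exact hK.hom_ext (by simp [k', U.d₁_k, ← h₂.w_assoc]) (by simp [k'])
  · exact hK.hom_ext (by simp [k', U.d₂_k, ← h₂.w_assoc]) (by simp [k'])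
  · exact hA.hom_ext (by simp [codiag', U.d₁_codiag]) (by simp [codiag'])
  · exact hA.hom_ext (by simp [codiag', U.d₂_codiag]) (by simp [codiag'])

theorem IsStable.eq_of_isPullback [HasPullbacks C] (hU : U.IsStable) {Y : C} {g : Y ⟶ X}
    (hg : g ≫ U.inl = g ≫ U.inr) {A₁' A₂' : C} {a₁ : A₁' ⟶ A₁} {w₁ : A₁' ⟶ Y}
    (h₁ : IsPullback a₁ w₁ m₁ g) {a₂ : A₂' ⟶ A₂} {w₂ : A₂' ⟶ Y} (h₂ : IsPullback a₂ w₂ m₂ g)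
    {T : C} {u v : Y ⟶ T} (hu₁ : w₁ ≫ u = w₁ ≫ v) (hu₂ : w₂ ≫ u = w₂ ≫ v) : u = v := by
  obtain ⟨U', hU'⟩ := hU.exists_pullback hg h₁ h₂ (.of_hasPullback p₂ a₂)
  exact U'.eq_of_inl_eq_inr hU' hu₁ hu₂

theorem IsStable.stableEpi [HasPullbacks C] (hU : U.IsStable) {Q I : C} {q₁ : A₁ ⟶ Q}
    {q₂ : A₂ ⟶ Q} {e : Q ⟶ I} {n : I ⟶ X} [Mono n] (hn : n ≫ U.inl = n ≫ U.inr)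
    (he₁ : q₁ ≫ e ≫ n = m₁) (he₂ : q₂ ≫ e ≫ n = m₂) : StableEpi e := by
  intro Q' I' e' a b hab
  refine ⟨fun {T} u v huv => ?_⟩
  have factors : ∀ {A A' : C} {q : A ⟶ Q} {a' : A' ⟶ A} {w : A' ⟶ I'},
      a' ≫ q ≫ e ≫ n = w ≫ b ≫ n → w ≫ u = w ≫ v := fun {_ _ q a' w} h => by
    obtain ⟨l, hl⟩ : ∃ l, l ≫ e' = w :=
      ⟨_, hab.lift_snd (a' ≫ q) w (by simpa [← cancel_mono n] using h)⟩
    rw [← hl, Category.assoc, huv, Category.assoc]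
  have h₁ := IsPullback.of_hasPullback m₁ (b ≫ n)
  have h₂ := IsPullback.of_hasPullback m₂ (b ≫ n)
  exact hU.eq_of_isPullback (by simp [hn]) h₁ h₂ (factors (by rw [he₁, h₁.w]))
    (factors (by rw [he₂, h₂.w]))

end UnionCokernelPair

theorem RmQuasiadhesive.exists_unionCokernelPair (hC : RmQuasiadhesive C) [HasPullbacks C]
    {X A₁ A₂ P : C} {m₁ : A₁ ⟶ X} {m₂ : A₂ ⟶ X} (hm₁ : RegularMono m₁) (hm₂ : RegularMono m₂)
    {p₁ : P ⟶ A₁} {p₂ : P ⟶ A₂} (hpb : IsPullback p₁ p₂ m₁ m₂) :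
    ∃ U : UnionCokernelPair m₁ m₂ p₂, U.IsStable := by
  have hp₂ : RegularMono p₂ := regularOfIsPullbackSndOfRegular hm₁ hpb.w hpb.isLimit
  obtain ⟨K, c₁, c₂, hK, hKs⟩ := hC.exists_isStablePushout hm₁ m₁
  obtain ⟨D, d₁, d₂, hD, hDs⟩ := hC.exists_isStablePushout hp₂ p₂
  have hk : p₂ ≫ m₂ ≫ c₁ = p₂ ≫ m₂ ≫ c₂ := by rw [← hpb.w_assoc, hK.w, hpb.w_assoc]
  have hpbk := isPullback_cokernelPair_comparison hpb hKs hD (hD.inl_desc _ _ hk)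
    (hD.inr_desc _ _ hk) (hK.inl_desc (𝟙 X) (𝟙 X) rfl) (hK.inr_desc (𝟙 X) (𝟙 X) rfl)
    (hD.inl_desc (𝟙 A₂) (𝟙 A₂) rfl) (hD.inr_desc (𝟙 A₂) (𝟙 A₂) rfl)
  obtain ⟨Z, ζ, θ, hZ, hZs⟩ :=
    hC.exists_isStablePushout (regularOfIsPullbackFstOfRegular hm₂ hpbk.w hpbk.isLimit)
      (hD.desc (𝟙 A₂) (𝟙 A₂) rfl)
  exact ⟨⟨K, c₁, c₂, hK, D, d₁, d₂, hD, _, hD.inl_desc _ _ hk, hD.inr_desc _ _ hk, _,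
    hD.inl_desc _ _ rfl, hD.inr_desc _ _ rfl, Z, ζ, θ, hZ⟩, hKs, hDs, hZs⟩

/-- In an rm-quasiadhesive category, the union of two regular subobjects
(the induced map out of the pushout over their intersection) factors as a
stable epimorphism followed by a regular monomorphism. -/
theorem union_stable_epi_regularMono_factorization [HasPullbacks C]
    (hC : RmQuasiadhesive C)
    {X A₁ A₂ P Q : C} (m₁ : A₁ ⟶ X) (m₂ : A₂ ⟶ X)
    (hm₁ : RegularMono m₁) (hm₂ : RegularMono m₂)
    (p₁ : P ⟶ A₁) (p₂ : P ⟶ A₂) (hpb : IsPullback p₁ p₂ m₁ m₂)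
    (q₁ : A₁ ⟶ Q) (q₂ : A₂ ⟶ Q) (hpo : IsPushout p₁ p₂ q₁ q₂)
    (m : Q ⟶ X) (hm₁' : q₁ ≫ m = m₁) (hm₂' : q₂ ≫ m = m₂) :
    ∃ (I : C) (e : Q ⟶ I) (n : I ⟶ X),
      e ≫ n = m ∧ StableEpi e ∧ Nonempty (RegularMono n) := by
  obtain ⟨U, hU⟩ := hC.exists_unionCokernelPair hm₁ hm₂ hpb
  have hm : m ≫ U.inl = m ≫ U.inr :=
    hpo.hom_ext (by simp only [reassoc_of% hm₁', U.condition₁])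
      (by simp only [reassoc_of% hm₂', U.condition₂])
  obtain ⟨I, n, n', hI⟩ : ∃ (I : C) (n n' : I ⟶ X), IsPullback n n' U.inl U.inr :=
    ⟨_, _, _, .of_hasPullback _ _⟩
  -- `inl` and `inr` have a common retraction, so their pullback is their equalizer
  obtain rfl : n = n' := by simpa using hI.w =≫ U.retraction
  have := hI.mono_fst_of_mono
  have he := hI.lift_fst m m hm
  exact ⟨I, hI.lift m m hm, n, he, hU.stableEpi hI.w (q₁ := q₁) (by rw [he, hm₁'])
    (q₂ := q₂) (by rw [he, hm₂']), ⟨regularMonoOfIsPullback hI⟩⟩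
end

section
/- In the category of reflexive 'antisymmetric-at-all-lengths' relations — sets X with a reflexive binary relation R such that for all n ≥ 2, x₁ R x₂ R ⋯ R xₙ R x₁ implies x₁ = x₂ = ⋯ = xₙ — the regular monomorphism given by the inclusion of ({0,2}, diagonal relation) into ({0,1,2}, S), where S is the diagonal together with 0 S 1 and 1 S 2, has a pushout along the map to the terminal object which is not a pullback square. Hence this category is not rm-quasiadhesive. -/
open CategoryTheory Limits

universe v u

/-- A set with a reflexive binary relation which is "antisymmetric at all
lengths": every cycle `x₀ R x₁ R ⋯ R xₙ₋₁ R x₀` (of length `n ≥ 2`) is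
constant. -/
structure ARel : Type 1 where
  α : Type
  r : α → α → Prop
  refl : ∀ x, r x x
  acyc : ∀ n : ℕ, 2 ≤ n → ∀ x : ℕ → α,
    (∀ i, i < n → r (x i) (x ((i + 1) % n))) →
    ∀ i j, i < n → j < n → x i = x j

/-- Relation-preserving functions make `ARel` into a category. -/
instance : Category ARel where
  Hom X Y := {f : X.α → Y.α // ∀ a b, X.r a b → Y.r (f a) (f b)}
  id X := ⟨id, fun _ _ h => h⟩
  comp f g := ⟨g.1 ∘ f.1, fun a b h => g.2 _ _ (f.2 _ _ h)⟩


/-- Auxiliary: if a function to `ℕ` is injective and weakly increasing along a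
cycle, then the cycle is constant. -/
private lemma cycle_const {α : Type} (f : α → ℕ) (hf : Function.Injective f)
    (n : ℕ) (hn : 2 ≤ n) (x : ℕ → α)
    (hx : ∀ i, i < n → f (x i) ≤ f (x ((i + 1) % n))) :
    ∀ i j, i < n → j < n → x i = x j := by
  have hn0 : 0 < n := by omega
  have key : ∀ k i, i < n → f (x i) ≤ f (x ((i + k) % n)) := by
    intro k
    induction k with
    | zero => intro i hi; rw [Nat.add_zero, Nat.mod_eq_of_lt hi]
    | succ k ih =>
      intro i hi
      have h1 := ih i hi
      have h2 := hx ((i + k) % n) (Nat.mod_lt _ hn0)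
      rw [Nat.mod_add_mod] at h2
      exact le_trans h1 h2
  intro i j hi hj
  have h1 : f (x i) ≤ f (x j) := by
    have := key (n - i + j) i hi
    rwa [show i + (n - i + j) = n + j by omega, Nat.add_mod_left,
      Nat.mod_eq_of_lt hj] at this
  have h2 : f (x j) ≤ f (x i) := by
    have := key (n - j + i) j hj
    rwa [show j + (n - j + i) = n + i by omega, Nat.add_mod_left,
      Nat.mod_eq_of_lt hi] at this
  exact hf (Nat.le_antisymm h1 h2)

private def bval : Bool → ℕ := fun b => cond b 1 0

private lemma bval_inj : Function.Injective bval := by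
  intro a b h
  cases a <;> cases b <;> simp [bval] at h ⊢

/-- `({0,2}`, represented by `Bool`, with the diagonal relation. -/
@[reducible] def Adiag : ARel :=
  ⟨Bool, Eq, fun _ => rfl, fun n hn x hx =>
    cycle_const bval bval_inj n hn x
      (fun i hi => le_of_eq (congrArg bval (hx i hi)))⟩

/-- The relation `S` on `{0,1,2}`: the diagonal together with `0 S 1`, `1 S 2`. -/
def S3 : Fin 3 → Fin 3 → Prop := fun a b => a = b ∨ (a = 0 ∧ b = 1) ∨ (a = 1 ∧ b = 2)

/-- `({0,1,2}, S)`. -/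
@[reducible] def BS : ARel :=
  ⟨Fin 3, S3, fun _ => Or.inl rfl, fun n hn x hx =>
    cycle_const Fin.val Fin.val_injective n hn x (fun i hi => by
      rcases hx i hi with h | ⟨h1, h2⟩ | ⟨h1, h2⟩
      · exact le_of_eq (congrArg Fin.val h)
      · rw [h1, h2]; decide
      · rw [h1, h2]; decide)⟩

/-- The terminal object: a point with the full relation. -/
@[reducible] def T1 : ARel :=
  ⟨PUnit, fun _ _ => True, fun _ => trivial, fun _ _ _ _ _ _ _ _ => rfl⟩

/-- The inclusion of `({0,2}, diagonal)` into `({0,1,2}, S)`. -/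
def ι : Adiag ⟶ BS :=
  ⟨fun b => if b then 2 else 0, fun a b h => h ▸ Or.inl rfl⟩

/-- The unique map from `Adiag` to the terminal object. -/
def tA : Adiag ⟶ T1 := ⟨fun _ => PUnit.unit, fun _ _ _ => trivial⟩

/-- The unique map from `BS` to the terminal object. -/
def tB : BS ⟶ T1 := ⟨fun _ => PUnit.unit, fun _ _ _ => trivial⟩


/-! The inclusion `ι : {0, 2} ⟶ {0, 1, 2}` is an equalizer, of the two maps into a lexicographic
product that differ only at `1`. Along the map to the point it has the point as pushout: a
relation-preserving map out of `({0,1,2}, S)` that identifies `0` and `2` sees the 2-cycle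
`0 S 1 S 2 = 0`, hence is constant. That square is not a pullback: the identity of `{0,1,2}`
and `tB` form a cone over it, and a lift through `ι` would put `1` in the image of `ι`. -/

namespace ARel

lemma hom_ext {X Y : ARel} {f g : X ⟶ Y} (h : ∀ x, f.1 x = g.1 x) : f = g :=
  Subtype.ext (funext h)

lemma antisymm (X : ARel) {a b : X.α} (hab : X.r a b) (hba : X.r b a) : a = b :=
  X.acyc 2 le_rfl (fun i => if i = 0 then a else b)
    (fun i hi => by interval_cases i <;> simpa) 0 1 (by omega) (by omega)

abbrev lex (X Y : ARel) : ARel where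
  α := X.α × Y.α
  r p q := X.r p.1 q.1 ∧ (p.1 = q.1 → Y.r p.2 q.2)
  refl p := ⟨X.refl p.1, fun _ => Y.refl p.2⟩
  acyc n hn x hx := by
    have hfst := X.acyc n hn (fun i => (x i).1) (fun i hi => (hx i hi).1)
    have hsnd := Y.acyc n hn (fun i => (x i).2) (fun i hi =>
      (hx i hi).2 (hfst _ _ hi (Nat.mod_lt _ (by omega))))
    exact fun i j hi hj => Prod.ext (hfst i j hi hj) (hsnd i j hi hj)

noncomputable def isLimitForkOfEmbedding {X Y Z : ARel} (m : X ⟶ Y) {f g : Y ⟶ Z}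
    (w : m ≫ f = m ≫ g) (hinj : Function.Injective m.1)
    (hreflect : ∀ a b, Y.r (m.1 a) (m.1 b) → X.r a b)
    (hrange : ∀ y, f.1 y = g.1 y → ∃ x, m.1 x = y) : IsLimit (Fork.ofι m w) :=
  Fork.IsLimit.mk' _ fun s =>
    have hs : ∀ z, ∃ x, m.1 x = s.ι.1 z := fun z =>
      hrange _ (congrFun (congrArg Subtype.val s.condition) z)
    let lift : s.pt ⟶ X := ⟨fun z => (hs z).choose, fun a b hab =>
      hreflect _ _ (by rw [(hs a).choose_spec, (hs b).choose_spec]; exact s.ι.2 a b hab)⟩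
    ⟨lift, hom_ext fun z => (hs z).choose_spec, fun {l} hl => hom_ext fun z =>
      hinj ((congrFun (congrArg Subtype.val hl) z).trans (hs z).choose_spec.symm)⟩

end ARel

noncomputable def ιRegularMono : RegularMono ι where
  Z := BS.lex Adiag
  left := ⟨fun a => (a, false), fun _ _ h => ⟨h, fun _ => rfl⟩⟩
  right := ⟨fun a => (a, decide (a = 1)), fun _ _ h => ⟨h, congrArg fun a => decide (a = 1)⟩⟩
  w := ARel.hom_ext fun b => by cases b <;> rfl
  isLimit := ARel.isLimitForkOfEmbedding ι _ (by decide)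
    (fun a b => by cases a <;> cases b <;> simp [ι, S3])
    (fun y hy => ⟨decide (y = 2), by revert hy; fin_cases y <;> decide⟩)

def T1IsTerminal : IsTerminal T1 :=
  IsTerminal.ofUniqueHom (fun _ => ⟨fun _ => PUnit.unit, fun _ _ _ => trivial⟩)
    (fun _ _ => ARel.hom_ext fun _ => rfl)

lemma BS_hom_apply_eq_of_zero_eq_two {W : ARel} (h : BS ⟶ W) (he : h.1 0 = h.1 2) (x : Fin 3) :
    h.1 x = h.1 0 := by
  have h01 : W.r (h.1 0) (h.1 1) := h.2 0 1 (Or.inr (Or.inl ⟨rfl, rfl⟩))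
  have h12 : W.r (h.1 1) (h.1 2) := h.2 1 2 (Or.inr (Or.inr ⟨rfl, rfl⟩))
  have h1 : h.1 1 = h.1 0 := W.antisymm (he ▸ h12) h01
  fin_cases x <;> simp [h1, he]

theorem isPushout_ι_tA : IsPushout ι tA tB (𝟙 T1) := by
  refine IsPushout.of_isColimit (c := PushoutCocone.mk tB (𝟙 T1) (ARel.hom_ext fun _ => rfl))
    (PushoutCocone.IsColimit.mk _ (fun s => s.inr) (fun s => ?_) (fun s => Category.id_comp _)
      (fun s m _ hr => by simpa using hr))
  have hglue (b : Bool) : s.inl.1 (ι.1 b) = s.inr.1 PUnit.unit :=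
    congrFun (congrArg Subtype.val s.condition) b
  have hconst := BS_hom_apply_eq_of_zero_eq_two s.inl ((hglue false).trans (hglue true).symm)
  exact ARel.hom_ext fun x => ((hconst x).trans (hglue false)).symm

theorem not_isPullback_ι_tA : ¬ IsPullback ι tA tB (𝟙 T1) := by
  intro h
  have w : 𝟙 BS ≫ tB = tB ≫ 𝟙 T1 := ARel.hom_ext fun _ => rfl
  have ι_ne_one : ∀ b, ι.1 b ≠ 1 := by decide
  exact ι_ne_one _ (congrFun (congrArg Subtype.val (h.lift_fst (𝟙 BS) tB w)) 1)

/-- In the category of reflexive antisymmetric-at-all-lengths relations, the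
regular monomorphism `ι` has a pushout along the map to the terminal object
which is not a pullback square; hence this category is not rm-quasiadhesive. -/
theorem aRel_not_rmQuasiadhesive :
    Nonempty (RegularMono ι) ∧ Nonempty (IsTerminal T1) ∧
    IsPushout ι tA tB (𝟙 T1) ∧ ¬ IsPullback ι tA tB (𝟙 T1) ∧
    ¬ RmQuasiadhesive ARel :=
  ⟨⟨ιRegularMono⟩, ⟨T1IsTerminal⟩, isPushout_ι_tA, not_isPullback_ι_tA,
    fun ⟨_, hquasi⟩ => not_isPullback_ι_tA (hquasi ι tA tB (𝟙 T1) ιRegularMono isPushout_ι_tA).2⟩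
end

section
/- A full subcategory of an adhesive category that is closed under pullbacks and under pushouts along monomorphisms is itself adhesive. -/
open CategoryTheory Limits

universe v u

/-!
The inclusion of a full subcategory is fully faithful, so it reflects pullbacks and pushouts.
The closure hypotheses make it create, hence preserve, pullbacks and pushouts along
monomorphisms; preserving pullbacks, it also preserves monomorphisms. A van Kampen cube in
the subcategory is therefore sent to one in the ambient adhesive category, where the
van Kampen property holds, and each of its faces reflects back.
-/

namespace CategoryTheory

variable {C : Type*} [Category* C] {D : Type*} [Category* D]

theorem adhesive_of_preserves_and_reflects_pushouts_of_mono (F : D ⥤ C) [Adhesive C]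
    [H₁ : ∀ {X Y S : D} (f : X ⟶ S) (g : Y ⟶ S) [Mono f], HasPullback f g]
    [H₂ : ∀ {X Y S : D} (f : S ⟶ X) (g : S ⟶ Y) [Mono f], HasPushout f g]
    [PreservesLimitsOfShape WalkingCospan F] [ReflectsLimitsOfShape WalkingCospan F]
    [H₃ : ∀ {X Y S : D} (f : S ⟶ X) (g : S ⟶ Y) [Mono f], PreservesColimit (span f g) F]
    [∀ {X Y S : D} (f : S ⟶ X) (g : S ⟶ Y) [Mono f], ReflectsColimit (span f g) F] :
    Adhesive D := by
  refine Adhesive.mk (hasPullback_of_mono_left := H₁) (hasPushout_of_mono_left := H₂) ?_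
  intro W X Y Z f g h i _ H W' X' Y' Z' f' g' h' i' αW αX αY αZ hf hg hh hi w
  have : Mono f' := PullbackCone.mono_fst_of_is_pullback_of_mono hf.isLimit
  calc IsPushout f' g' h' i'
      ↔ IsPushout (F.map f') (F.map g') (F.map h') (F.map i') := (IsPushout.map_iff F w.w).symm
    _ ↔ IsPullback (F.map h') (F.map αX) (F.map αZ) (F.map h) ∧
        IsPullback (F.map i') (F.map αY) (F.map αZ) (F.map i) :=
      Adhesive.van_kampen (H.map F) _ _ _ _ _ _ _ _ (hf.map F) (hg.map F)
        (F.map_commSq hh) (F.map_commSq hi) (F.map_commSq w)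
    _ ↔ IsPullback h' αX αZ h ∧ IsPullback i' αY αZ i :=
      and_congr (IsPullback.map_iff F hh.w) (IsPullback.map_iff F hi.w)

namespace ObjectProperty

variable {P : ObjectProperty C}

noncomputable abbrev createsLimitCospanι {X Y Z : P.FullSubcategory} (f : X ⟶ Z) (g : Y ⟶ Z)
    [HasPullback (P.ι.map f) (P.ι.map g)] (h : P (pullback (P.ι.map f) (P.ι.map g))) :
    CreatesLimit (cospan f g) P.ι :=
  createsLimitFullSubcategoryInclusion' _
    ((IsLimit.postcomposeInvEquiv (cospanCompIso P.ι f g) _).symm (pullbackIsPullback _ _)) h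

noncomputable abbrev createsColimitSpanι {X Y Z : P.FullSubcategory} (f : Z ⟶ X) (g : Z ⟶ Y)
    [HasPushout (P.ι.map f) (P.ι.map g)] (h : P (pushout (P.ι.map f) (P.ι.map g))) :
    CreatesColimit (span f g) P.ι :=
  createsColimitFullSubcategoryInclusion' _
    ((IsColimit.precomposeHomEquiv (spanCompIso P.ι f g) _).symm (pushoutIsPushout _ _)) h

noncomputable abbrev createsLimitsOfShapeWalkingCospanι [HasPullbacks C]
    (hP : ∀ {X Y Z : C} (f : X ⟶ Z) (g : Y ⟶ Z), P X → P Y → P Z → P (pullback f g)) :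
    CreatesLimitsOfShape WalkingCospan P.ι where
  CreatesLimit {K} :=
    have := createsLimitCospanι (K.map WalkingCospan.Hom.inl) (K.map WalkingCospan.Hom.inr)
      (hP _ _ (K.obj _).2 (K.obj _).2 (K.obj _).2)
    createsLimitOfIsoDiagram _ (diagramIsoCospan K).symm

end ObjectProperty

end CategoryTheory

open ObjectProperty in
/-- A full subcategory of an adhesive category that is closed under pullbacks
and under pushouts along monomorphisms is itself adhesive. -/
theorem fullSubcategory_adhesive {C : Type u} [Category.{v} C] [HasPullbacks C]
    [Adhesive C] (P : C → Prop)
    (hpb : ∀ {X Y Z : C} (f : X ⟶ Z) (g : Y ⟶ Z),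
      P X → P Y → P Z → P (pullback f g))
    (hpo : ∀ {X Y Z : C} (f : Z ⟶ X) (g : Z ⟶ Y) [Mono f],
      P X → P Y → P Z → P (pushout f g)) :
    Adhesive (ObjectProperty.FullSubcategory P) := by
  have := createsLimitsOfShapeWalkingCospanι hpb
  have := hasLimitsOfShape_of_hasLimitsOfShape_createsLimitsOfShape (J := WalkingCospan) (ι P)
  have (X Y Z : FullSubcategory P) (f : Z ⟶ X) (g : Z ⟶ Y) [Mono f] :
      CreatesColimit (span f g) (ι P) :=
    createsColimitSpanι f g (hpo _ _ X.2 Y.2 Z.2)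
  have {X Y Z : FullSubcategory P} (f : Z ⟶ X) (g : Z ⟶ Y) [Mono f] :
      HasColimit (span f g ⋙ ι P) :=
    hasColimit_of_iso (spanCompIso _ f g)
  have hasPushout {X Y Z : FullSubcategory P} (f : Z ⟶ X) (g : Z ⟶ Y) [Mono f] :
      HasPushout f g :=
    hasColimit_of_created _ (ι P)
  have preservesPushout {X Y Z : FullSubcategory P} (f : Z ⟶ X) (g : Z ⟶ Y) [Mono f] :
      PreservesColimit (span f g) (ι P) :=
    preservesColimit_of_createsColimit_and_hasColimit _ _
  exact adhesive_of_preserves_and_reflects_pushouts_of_mono (ι P)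
    (H₂ := hasPushout) (H₃ := preservesPushout)
end

section
/- In an adhesive category, binary unions of subobjects are effective: given subobjects h : A ⟶ E and p : B ⟶ E with intersection C (pullback, projections m : C ⟶ A, f : C ⟶ B), the pushout D of f along m exists and the induced morphism D ⟶ E is a monomorphism, exhibiting D as the union of A and B in the subobject lattice of E. -/
/-!
Mathlib already proves the canonical instance of the theorem: for monos `h` and `p`, the map
`pushout (pullback.fst h p) (pullback.snd h p) ⟶ E` is mono (Lack–Sobociński, Thm 5.1). An
arbitrary pullback square and pushout square over `h, p` are isomorphic to the canonical ones,
so `x` is that map up to an isomorphism. Minimality is the universal property of the pushout,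
the compatibility on the intersection being checked after composing with the mono `w`.
-/

open CategoryTheory Limits

universe v u

variable {C : Type u} [Category.{v} C]

theorem Adhesive.mono_of_isPullback_of_isPushout [Adhesive C] {P A B D E : C}
    {m : P ⟶ A} {f : P ⟶ B} {g : A ⟶ D} {n : B ⟶ D} {h : A ⟶ E} {p : B ⟶ E} {x : D ⟶ E}
    [Mono h] [Mono p] (hpb : IsPullback m f h p) (hpo : IsPushout m f g n)
    (hgx : g ≫ x = h) (hnx : n ≫ x = p) : Mono x := by
  have hpo' : IsPushout (pullback.fst h p) (pullback.snd h p) g n :=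
    hpo.of_iso hpb.isoPullback (Iso.refl _) (Iso.refl _) (Iso.refl _)
      (by simp) (by simp) (by simp) (by simp)
  have hx : x = hpo'.isoPushout.hom ≫ pushout.desc h p pullback.condition :=
    hpo'.hom_ext (by simp [hgx, pushout.inl_desc]) (by simp [hnx, pushout.inr_desc])
  have : Mono (pushout.desc h p pullback.condition) := Adhesive.desc_mono_of_mono
  rw [hx]
  infer_instance

/-- In an adhesive category, binary unions of subobjects are effective: the
pushout over the intersection exists, the induced map to the ambient object is a
monomorphism, and it is the least subobject containing both. -/
theorem effective_unions_adhesive [Adhesive C] {A B E P : C}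
    (h : A ⟶ E) (p : B ⟶ E) [Mono h] [Mono p]
    (m : P ⟶ A) (f : P ⟶ B) (hpb : IsPullback m f h p) :
    HasPushout m f ∧
    ∀ {D : C} (g : A ⟶ D) (n : B ⟶ D) (x : D ⟶ E),
      IsPushout m f g n → g ≫ x = h → n ≫ x = p →
      Mono x ∧
      ∀ {W : C} (w : W ⟶ E), Mono w →
        (∃ t : A ⟶ W, t ≫ w = h) → (∃ s : B ⟶ W, s ≫ w = p) →
        ∃ u : D ⟶ W, u ≫ w = x := by
  have : Mono m := hpb.mono_fst_of_mono
  refine ⟨inferInstance, fun g n x hpo hgx hnx =>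
    ⟨Adhesive.mono_of_isPullback_of_isPushout hpb hpo hgx hnx, ?_⟩⟩
  rintro W w hw ⟨t, rfl⟩ ⟨s, rfl⟩
  have hts : m ≫ t = f ≫ s := by
    rw [← cancel_mono w]
    simpa using hpb.w
  exact ⟨hpo.desc t s hts, hpo.hom_ext (by simp [← hgx]) (by simp [← hnx])⟩
end
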